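/- arXiv:1005.1531 — 2 statements merged into one kernel-verified Lean document; each statement's English description precedes it below -/
import Mathlib

section
/- Let m, ℓ, a be positive integers. Then ((ℓ, m)) divides a if and only if a can be written as a nonnegative integer combination of the elements of G_m(ℓ, a), i.e. there exists a function x : G_m(ℓ,a) → ℕ with ∑_{g ∈ G_m(ℓ,a)} g·x(g) = a. -/
/-- `((ℓ, m)) = ∏_{p prime, p ∣ ℓ} p ^ ν_p(m)`. -/
def dblParen (ℓ m : ℕ) : ℕ := ∏ p ∈ ℓ.primeFactors, p ^ (m.factorization p)

/-- `G_m(ℓ, a) = { g ∈ ℕ, g ≥ 1 : g ≤ a and gcd(g·ℓ, m) = g }`. -/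
def Gset (m ℓ a : ℕ) : Finset ℕ :=
  (Finset.Icc 1 a).filter (fun g => Nat.gcd (g * ℓ) m = g)

/-!
Comparing `p`-adic valuations, `gcd (g * ℓ) m = g` says that at every prime `p ∣ ℓ` the
exponent of `g` equals that of `m`, while elsewhere it is at most that of `m`. Hence every
element of `G_m(ℓ, a)` is a multiple of `((ℓ, m))`, while `((ℓ, m))` itself satisfies the gcd
condition, so every multiple `a` of it is represented by the single part `((ℓ, m))`.
-/

open Finset

lemma dblParen_ne_zero (ℓ m : ℕ) : dblParen ℓ m ≠ 0 :=
  prod_ne_zero_iff.mpr fun _ hp => pow_ne_zero _ (Nat.prime_of_mem_primeFactors hp).ne_zero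

lemma factorization_dblParen (ℓ m p : ℕ) :
    (dblParen ℓ m).factorization p = if p ∈ ℓ.primeFactors then m.factorization p else 0 := by
  rw [dblParen, Nat.factorization_prod fun q hq =>
    pow_ne_zero _ (Nat.prime_of_mem_primeFactors hq).ne_zero, Finsupp.finsetSum_apply]
  rw [sum_congr rfl fun q hq => by rw [(Nat.prime_of_mem_primeFactors hq).factorization_pow]]
  simp [Finsupp.single_apply]

lemma gcd_mul_eq_self_iff {g ℓ m : ℕ} (hg : g ≠ 0) (hℓ : ℓ ≠ 0) (hm : m ≠ 0) :
    Nat.gcd (g * ℓ) m = g ↔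
      ∀ p, min (g.factorization p + ℓ.factorization p) (m.factorization p) = g.factorization p := by
  rw [← Nat.factorization_inj.eq_iff (Nat.gcd_pos_of_pos_right _ hm.bot_lt).ne' hg,
    Nat.factorization_gcd (mul_ne_zero hg hℓ) hm, Nat.factorization_mul hg hℓ, Finsupp.ext_iff]
  rfl

lemma dblParen_dvd_of_gcd_mul_eq_self {g ℓ m : ℕ} (hg : g ≠ 0) (hℓ : ℓ ≠ 0) (hm : m ≠ 0)
    (h : Nat.gcd (g * ℓ) m = g) : dblParen ℓ m ∣ g := by
  rw [← Nat.factorization_le_iff_dvd (dblParen_ne_zero ℓ m) hg]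
  intro p
  have hp := (gcd_mul_eq_self_iff hg hℓ hm).mp h p
  rw [factorization_dblParen]
  split_ifs with hpℓ
  · have : ℓ.factorization p ≠ 0 := (Finsupp.mem_support_iff (f := ℓ.factorization)).mp hpℓ
    omega
  · exact Nat.zero_le _

lemma gcd_dblParen_mul_eq_dblParen {ℓ m : ℕ} (hℓ : ℓ ≠ 0) (hm : m ≠ 0) :
    Nat.gcd (dblParen ℓ m * ℓ) m = dblParen ℓ m := by
  refine (gcd_mul_eq_self_iff (dblParen_ne_zero ℓ m) hℓ hm).mpr fun p => ?_
  rw [factorization_dblParen]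
  split_ifs with hpℓ
  · omega
  · simp [(Finsupp.notMem_support_iff (f := ℓ.factorization)).mp hpℓ]

theorem dblParen_dvd_iff_rep (m ℓ a : ℕ) (hm : 0 < m) (hℓ : 0 < ℓ) (ha : 0 < a) :
    dblParen ℓ m ∣ a ↔ ∃ x : ℕ → ℕ, ∑ g ∈ Gset m ℓ a, g * x g = a := by
  constructor
  · intro hda
    have hmem : dblParen ℓ m ∈ Gset m ℓ a :=
      mem_filter.mpr ⟨mem_Icc.mpr ⟨Nat.one_le_iff_ne_zero.mpr (dblParen_ne_zero ℓ m),
        Nat.le_of_dvd ha hda⟩, gcd_dblParen_mul_eq_dblParen hℓ.ne' hm.ne'⟩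
    refine ⟨fun g => if g = dblParen ℓ m then a / dblParen ℓ m else 0, ?_⟩
    simp_rw [mul_ite, mul_zero]
    rw [sum_ite_eq', if_pos hmem, Nat.mul_div_cancel' hda]
  · rintro ⟨x, hx⟩
    rw [← hx]
    refine dvd_sum fun g hg => Dvd.dvd.mul_right ?_ _
    obtain ⟨hg, hgcd⟩ := mem_filter.mp hg
    exact dblParen_dvd_of_gcd_mul_eq_self (Nat.one_le_iff_ne_zero.mp (mem_Icc.mp hg).1)
      hℓ.ne' hm.ne' hgcd
end

section
/- Let g, ℓ be positive integers and let C_1, …, C_g be disjoint cycles of length ℓ each. Then the number of cycles D of length g·ℓ on the union of their supports such that D^m = C_1 ⋯ C_g (where m is a positive integer with gcd(g·ℓ, m) = g) equals (g−1)! · ℓ^{g−1}. -/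
/-!
Put `P = C₁ ⋯ C_g` and `n = gℓ`. The centraliser of `P` acts by conjugation on the `n`-cycles
`D` with `D ^ m = P`. The action is transitive: two `n`-cycles are conjugate, and an element
conjugating one solution into another commutes with `P`. The stabiliser of a solution `D₀` is
the centraliser of `D₀`, so the number of solutions is `|Z(P)| / |Z(D₀)| = ℓ^g g! / (gℓ)`.
A solution exists because the `m`-th power of an `n`-cycle is a product of `gcd(n, m) = g`
disjoint `ℓ`-cycles, hence is conjugate to `P`.
-/

open Equiv Equiv.Perm Finset MulAction Subgroup

theorem nat_card_isConj_pow_eq_mul_nat_card_centralizer {G : Type*} [Group G] (d : G) (m : ℕ) :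
    Nat.card {x : G // IsConj d x ∧ x ^ m = d ^ m} * Nat.card (centralizer {d}) =
      Nat.card (centralizer {d ^ m}) := by
  set K := stabilizer (ConjAct G) (d ^ m)
  have horbit : orbit K d = {x | IsConj d x ∧ x ^ m = d ^ m} := by
    ext x
    simp only [mem_orbit_iff, Set.mem_ofPred_eq]
    constructor
    · rintro ⟨⟨k, hk⟩, rfl⟩
      exact ⟨(ConjAct.mem_orbit_conjAct.mp ⟨k, rfl⟩).symm, (smul_pow' k d m).symm.trans hk⟩
    · rintro ⟨hx, hxm⟩
      obtain ⟨k, rfl⟩ := ConjAct.mem_orbit_conjAct.mpr hx.symm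
      exact ⟨⟨k, (smul_pow' k d m).trans hxm⟩, rfl⟩
  have hle : stabilizer (ConjAct G) d ≤ K := fun k hk =>
    (smul_pow' k d m).trans (congrArg (· ^ m) hk)
  have hstab : stabilizer K d = (stabilizer (ConjAct G) d).subgroupOf K := rfl
  have horbit_stab := (stabilizer K d).card_mul_index
  rw [index_stabilizer, horbit, hstab, Nat.card_congr (subgroupOfEquivOfLe hle).toEquiv,
    ← Nat.card_coe_set_eq] at horbit_stab
  rw [nat_card_centralizer_nat_card_stabilizer, nat_card_centralizer_nat_card_stabilizer,
    ← horbit_stab, mul_comm]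
  rfl

namespace Equiv.Perm

variable {α : Type*} [Fintype α] [DecidableEq α]

theorem cycleType_eq_singleton_iff {σ : Perm α} {n : ℕ} :
    σ.cycleType = {n} ↔ σ.IsCycle ∧ #σ.support = n := by
  constructor
  · intro h
    have hσ : σ.IsCycle := card_cycleType_eq_one.mp (by rw [h, Multiset.card_singleton])
    exact ⟨hσ, Multiset.singleton_inj.mp (hσ.cycleType.symm.trans h)⟩
  · rintro ⟨hσ, rfl⟩
    exact hσ.cycleType

theorem IsCycle.orderOf_of_mem_cycleFactorsFinset_pow {c τ : Perm α} {m : ℕ} (hc : c.IsCycle)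
    (hτ : τ ∈ (c ^ m).cycleFactorsFinset) : orderOf τ = orderOf (c ^ m) := by
  have hτcyc := (mem_cycleFactorsFinset_iff.mp hτ).1
  obtain ⟨a, ha⟩ := hτcyc.nonempty_support
  have hac : a ∈ c.support := support_pow_le c m (mem_cycleFactorsFinset_support_le hτ ha)
  -- Both `τ ^ j = 1` and `(c ^ m) ^ j = 1` say that `c ^ (m * j)` fixes `a`.
  refine orderOf_eq_orderOf_iff.mpr fun j => ?_
  rw [hτcyc.pow_eq_one_iff' (mem_support.mp ha), ← pow_mul,
    hc.pow_eq_one_iff' (mem_support.mp hac), cycle_is_cycleOf ha hτ, cycleOf_pow_apply_self,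
    pow_mul]

theorem IsCycle.cycleType_pow {c : Perm α} {m : ℕ} (hc : c.IsCycle) (hm : ¬ #c.support ∣ m) :
    (c ^ m).cycleType =
      Multiset.replicate ((#c.support).gcd m) (#c.support / (#c.support).gcd m) := by
  have hsupp : (c ^ m).support = c.support := hc.support_pow_eq_iff.2 (by rwa [hc.orderOf])
  have hall : ∀ k ∈ (c ^ m).cycleType, k = #c.support / (#c.support).gcd m := by
    intro k hk
    obtain ⟨τ, hτ, rfl⟩ := Multiset.mem_map.mp hk
    rw [Function.comp_apply, ← (mem_cycleFactorsFinset_iff.mp hτ).1.orderOf,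
      hc.orderOf_of_mem_cycleFactorsFinset_pow hτ, orderOf_pow, hc.orderOf]
  have hsum := sum_cycleType (c ^ m)
  rw [Multiset.eq_replicate_of_mem hall, Multiset.sum_replicate, smul_eq_mul, hsupp] at hsum
  refine Multiset.eq_replicate.mpr ⟨?_, hall⟩
  have hn : 0 < #c.support := card_pos.mpr hc.nonempty_support
  have hd : 0 < #c.support / (#c.support).gcd m :=
    Nat.div_pos (Nat.gcd_le_left m hn) (Nat.gcd_pos_of_pos_left m hn)
  refine Nat.eq_of_mul_eq_mul_right hd ?_
  rw [hsum, Nat.mul_div_cancel' (Nat.gcd_dvd_left _ _)]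

theorem exists_cycleType_pow_eq {P : Perm α} {g ℓ m : ℕ} (hg : 0 < g)
    (hP : P.cycleType = Multiset.replicate g ℓ) (hgcd : (g * ℓ).gcd m = g) :
    ∃ D : Perm α, D.cycleType = {g * ℓ} ∧ D ^ m = P := by
  have hℓ : 2 ≤ ℓ :=
    two_le_of_mem_cycleType (hP ▸ Multiset.mem_replicate.mpr ⟨hg.ne', rfl⟩)
  obtain ⟨E, hE⟩ : ∃ E : Perm α, E.cycleType = {g * ℓ} := by
    refine (exists_with_cycleType_iff α).mpr ⟨?_, ?_⟩
    · simpa [hP] using sum_cycleType_le P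
    · simpa using hℓ.trans (Nat.le_mul_of_pos_left ℓ hg)
  obtain ⟨hEcyc, hEsupp⟩ := cycleType_eq_singleton_iff.mp hE
  have hndvd : ¬ g * ℓ ∣ m := fun h => by
    rw [Nat.gcd_eq_left h, Nat.mul_eq_left hg.ne'] at hgcd
    omega
  have hEm : (E ^ m).cycleType = P.cycleType := by
    rw [hEcyc.cycleType_pow (hEsupp ▸ hndvd), hEsupp, hgcd, Nat.mul_div_cancel_left _ hg, hP]
  obtain ⟨h, hconj⟩ := isConj_iff.mp (isConj_iff_cycleType_eq.mpr hEm)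
  exact ⟨h * E * h⁻¹, by rw [cycleType_conj, hE], by rw [conj_pow, hconj]⟩

theorem isConj_and_pow_eq_iff {D₀ D P : Perm α} {n m : ℕ} (hD₀ : D₀.cycleType = {n})
    (hD₀m : D₀ ^ m = P) (hP : #P.support = n) :
    (IsConj D₀ D ∧ D ^ m = D₀ ^ m) ↔
      D.IsCycle ∧ #D.support = n ∧ D.support = P.support ∧ D ^ m = P := by
  rw [hD₀m, isConj_comm, isConj_iff_cycleType_eq, hD₀, cycleType_eq_singleton_iff]
  refine ⟨fun ⟨⟨hcyc, hcard⟩, hpow⟩ => ⟨hcyc, hcard, ?_, hpow⟩,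
    fun ⟨hcyc, hcard, _, hpow⟩ => ⟨⟨hcyc, hcard⟩, hpow⟩⟩
  -- `P.support ⊆ D.support`, and both have `n` points.
  exact (eq_of_subset_of_card_le (hpow ▸ support_pow_le D m) (by rw [hcard, hP])).symm

theorem support_prod_ofFn {g : ℕ} {C : Fin g → Perm α}
    (hdisj : Pairwise fun i j => (C i).Disjoint (C j)) :
    (List.ofFn C).prod.support = univ.biUnion fun i => (C i).support := by
  have hl : (List.ofFn C).Pairwise Disjoint := List.pairwise_ofFn.mpr fun _ _ h => hdisj h.ne
  ext x
  constructor
  · intro hx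
    obtain ⟨f, hf, hxf⟩ := exists_mem_support_of_mem_support_prod hx
    obtain ⟨i, rfl⟩ := List.mem_ofFn.mp hf
    exact mem_biUnion.mpr ⟨i, mem_univ _, hxf⟩
  · intro hx
    obtain ⟨i, -, hxi⟩ := mem_biUnion.mp hx
    exact support_le_prod_of_mem (List.mem_ofFn.mpr ⟨i, rfl⟩) hl hxi

theorem cycleType_prod_ofFn {g : ℕ} {C : Fin g → Perm α} (hcyc : ∀ i, (C i).IsCycle)
    (hdisj : Pairwise fun i j => (C i).Disjoint (C j)) :
    (List.ofFn C).prod.cycleType = (List.ofFn fun i => #(C i).support : Multiset ℕ) := by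
  rw [cycleType_eq (List.ofFn C) rfl (fun σ hσ => ?_)
    (List.pairwise_ofFn.mpr fun _ _ h => hdisj h.ne), List.map_ofFn]
  · rfl
  · obtain ⟨i, rfl⟩ := List.mem_ofFn.mp hσ
    exact hcyc i

end Equiv.Perm

theorem card_big_cycles_over_product_general {α : Type*} [Fintype α] [DecidableEq α]
    (g ℓ m : ℕ) (hg : 0 < g)
    (hgcd : Nat.gcd (g * ℓ) m = g)
    (C : Fin g → Equiv.Perm α)
    (hcyc : ∀ i, (C i).IsCycle ∧ (C i).support.card = ℓ)
    (hdisj : Pairwise fun i j => (C i).Disjoint (C j)) :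
    Nat.card {D : Equiv.Perm α // D.IsCycle ∧ D.support.card = g * ℓ ∧
        D.support = Finset.univ.biUnion (fun i => (C i).support) ∧
        D ^ m = (List.ofFn C).prod} =
      Nat.factorial (g - 1) * ℓ ^ (g - 1) := by
  have hP : (List.ofFn C).prod.cycleType = Multiset.replicate g ℓ := by
    rw [cycleType_prod_ofFn (fun i => (hcyc i).1) hdisj]
    simp [hcyc, Multiset.coe_replicate]
  have hPsupp : #(List.ofFn C).prod.support = g * ℓ := by
    rw [← sum_cycleType, hP, Multiset.sum_replicate, smul_eq_mul]
  obtain ⟨D₀, hD₀, hD₀m⟩ := exists_cycleType_pow_eq hg hP hgcd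
  have hcount := nat_card_isConj_pow_eq_mul_nat_card_centralizer D₀ m
  rw [Nat.card_congr (Equiv.subtypeEquivRight fun D => isConj_and_pow_eq_iff hD₀ hD₀m hPsupp),
    support_prod_ofFn hdisj, hD₀m, nat_card_centralizer, nat_card_centralizer, hD₀, hP]
    at hcount
  simp only [Multiset.sum_singleton, Multiset.prod_singleton, Multiset.toFinset_singleton,
    Multiset.count_singleton_self, Multiset.sum_replicate, Multiset.prod_replicate,
    Multiset.toFinset_replicate, Multiset.count_replicate_self, hg.ne', if_false, prod_singleton,
    smul_eq_mul, Nat.factorial_one, mul_one] at hcount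
  -- `hcount : #solutions * ((|α| - gℓ)! * (g * ℓ)) = (|α| - gℓ)! * ℓ ^ g * g!`
  have hℓ : 0 < ℓ := (hcyc ⟨0, hg⟩).2 ▸ card_pos.mpr (hcyc ⟨0, hg⟩).1.nonempty_support
  obtain ⟨k, rfl⟩ : ∃ k, g = k + 1 := ⟨g - 1, by omega⟩
  refine Nat.eq_of_mul_eq_mul_right
    (by positivity : 0 < (Fintype.card α - (k + 1) * ℓ).factorial * ((k + 1) * ℓ)) ?_
  rw [hcount, Nat.factorial_succ, pow_succ, Nat.add_sub_cancel]
  ring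

theorem card_big_cycles_over_product {α : Type*} [Fintype α] [DecidableEq α]
    (g ℓ m : ℕ) (hg : 0 < g) (hℓ : 0 < ℓ) (hm : 0 < m)
    (hgcd : Nat.gcd (g * ℓ) m = g)
    (C : Fin g → Equiv.Perm α)
    (hcyc : ∀ i, (C i).IsCycle ∧ (C i).support.card = ℓ)
    (hdisj : Pairwise fun i j => (C i).Disjoint (C j)) :
    Nat.card {D : Equiv.Perm α // D.IsCycle ∧ D.support.card = g * ℓ ∧
        D.support = Finset.univ.biUnion (fun i => (C i).support) ∧
        D ^ m = (List.ofFn C).prod} =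
      Nat.factorial (g - 1) * ℓ ^ (g - 1) :=
  card_big_cycles_over_product_general g ℓ m hg hgcd C hcyc hdisj
end
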